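/- Let u be smooth on the half-space with x > 0, s ∈ ℝ, n ≥ 1, and suppose s(n−s)·u = −x²·Δu + (n−1)·x·∂ₓu. Set U := x^{s−n}·u. Then U satisfies x·ΔU + (1−2γ)·∂ₓU = 0 with γ = s − n/2, as an identity of smooth functions on {x > 0}. -/

import Mathlib

/-- The flat Laplacian on `ℝ^n × ℝ`, computed as the sum of the second
directional derivatives along the coordinate directions. -/
noncomputable def flatLap (n : ℕ) (f : EuclideanSpace ℝ (Fin n) × ℝ → ℝ)
    (p : EuclideanSpace ℝ (Fin n) × ℝ) : ℝ :=
  (∑ i : Fin n, fderiv ℝ (fun q => fderiv ℝ f q (EuclideanSpace.single i 1, 0)) p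
      (EuclideanSpace.single i 1, 0))
  + fderiv ℝ (fun q => fderiv ℝ f q (0, 1)) p (0, 1)

lemma rpow_mul_hasFDerivAt {n : ℕ} (β : ℝ) {p : EuclideanSpace ℝ (Fin n) × ℝ} (hp : 0 < p.2)
    {f : EuclideanSpace ℝ (Fin n) × ℝ → ℝ} (hf : DifferentiableAt ℝ f p) :
    HasFDerivAt (fun q : EuclideanSpace ℝ (Fin n) × ℝ => q.2 ^ β * f q)
      ((p.2 ^ β) • fderiv ℝ f p
        + (β * p.2 ^ (β - 1) * f p) • ContinuousLinearMap.snd ℝ (EuclideanSpace ℝ (Fin n)) ℝ) p := by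
  have hr : HasFDerivAt (fun q : EuclideanSpace ℝ (Fin n) × ℝ => q.2 ^ β)
      ((β * p.2 ^ (β - 1)) • ContinuousLinearMap.snd ℝ (EuclideanSpace ℝ (Fin n)) ℝ) p :=
    (Real.hasDerivAt_rpow_const (Or.inl hp.ne')).comp_hasFDerivAt p hasFDerivAt_snd
  have h := hr.mul hf.hasFDerivAt
  rw [smul_smul, mul_comm (f p)] at h
  exact h

lemma fderiv_rpow_mul {n : ℕ} (β : ℝ) {p : EuclideanSpace ℝ (Fin n) × ℝ} (hp : 0 < p.2)
    {f : EuclideanSpace ℝ (Fin n) × ℝ → ℝ} (hf : DifferentiableAt ℝ f p)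
    (w : EuclideanSpace ℝ (Fin n) × ℝ) :
    fderiv ℝ (fun q => q.2 ^ β * f q) p w
      = β * p.2 ^ (β - 1) * w.2 * f p + p.2 ^ β * fderiv ℝ f p w := by
  rw [(rpow_mul_hasFDerivAt β hp hf).fderiv]
  simp
  ring

/-- Core computation of the extension lemma: if `u` is smooth on `{x > 0}` and
satisfies `s(n−s)u = −x²Δu + (n−1)x∂ₓu`, then `U = x^{s−n}u` satisfies
`xΔU + (1−2γ)∂ₓU = 0` with `γ = s − n/2`, as an identity on `{x > 0}`. -/
theorem extension_pde_identity
    (n : ℕ) (hn : 1 ≤ n) (s : ℝ)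
    (u : EuclideanSpace ℝ (Fin n) × ℝ → ℝ)
    (hu : ContDiffOn ℝ (⊤ : ℕ∞) u {p | 0 < p.2})
    (heq : ∀ p : EuclideanSpace ℝ (Fin n) × ℝ, 0 < p.2 →
      s * ((n : ℝ) - s) * u p
        = - p.2 ^ 2 * flatLap n u p + ((n : ℝ) - 1) * p.2 * fderiv ℝ u p (0, 1))
    (U : EuclideanSpace ℝ (Fin n) × ℝ → ℝ)
    (hU : ∀ p : EuclideanSpace ℝ (Fin n) × ℝ, 0 < p.2 →
      U p = p.2 ^ (s - (n : ℝ)) * u p)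
    (γ : ℝ) (hγ : γ = s - (n : ℝ) / 2) :
    ∀ p : EuclideanSpace ℝ (Fin n) × ℝ, 0 < p.2 →
      p.2 * flatLap n U p + (1 - 2 * γ) * fderiv ℝ U p (0, 1) = 0 := by
  set α := s - (n : ℝ) with hα
  have hO : IsOpen {q : EuclideanSpace ℝ (Fin n) × ℝ | 0 < q.2} :=
    isOpen_lt continuous_const continuous_snd
  have huC : ∀ q : EuclideanSpace ℝ (Fin n) × ℝ, 0 < q.2 → ContDiffAt ℝ (⊤ : ℕ∞) u q :=
    fun q hq => hu.contDiffAt (hO.mem_nhds hq)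
  have hud : ∀ q : EuclideanSpace ℝ (Fin n) × ℝ, 0 < q.2 → DifferentiableAt ℝ u q :=
    fun q hq => (huC q hq).differentiableAt (by simp)
  have hu2 : ∀ q : EuclideanSpace ℝ (Fin n) × ℝ, 0 < q.2 →
      ∀ v : EuclideanSpace ℝ (Fin n) × ℝ, DifferentiableAt ℝ (fun r => fderiv ℝ u r v) q := by
    intro q hq v
    have h1 : ContDiffAt ℝ (⊤ : ℕ∞) (fderiv ℝ u) q := (huC q hq).fderiv_right (by simp)
    exact (h1.differentiableAt (by simp)).clm_apply (differentiableAt_const v)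
  -- first derivative of U
  have hD1 : ∀ q : EuclideanSpace ℝ (Fin n) × ℝ, 0 < q.2 →
      ∀ w : EuclideanSpace ℝ (Fin n) × ℝ,
      fderiv ℝ U q w = α * q.2 ^ (α - 1) * w.2 * u q + q.2 ^ α * fderiv ℝ u q w := by
    intro q hq w
    have he : U =ᶠ[nhds q] fun r => r.2 ^ α * u r :=
      Filter.eventually_of_mem (hO.mem_nhds hq) (fun r hr => hU r hr)
    rw [he.fderiv_eq]
    exact fderiv_rpow_mul α hq (hud q hq) w
  intro p hp
  -- second derivative of U
  have hD2 : ∀ v w : EuclideanSpace ℝ (Fin n) × ℝ,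
      fderiv ℝ (fun r => fderiv ℝ U r v) p w
        = (α * v.2) * ((α - 1) * p.2 ^ (α - 1 - 1) * w.2 * u p
            + p.2 ^ (α - 1) * fderiv ℝ u p w)
          + (α * p.2 ^ (α - 1) * w.2 * fderiv ℝ u p v
            + p.2 ^ α * fderiv ℝ (fun r => fderiv ℝ u r v) p w) := by
    intro v w
    have he : (fun r => fderiv ℝ U r v)
        =ᶠ[nhds p] fun r => (α * v.2) * (r.2 ^ (α - 1) * u r) + r.2 ^ α * fderiv ℝ u r v := by
      refine Filter.eventually_of_mem (hO.mem_nhds hp) (fun r hr => ?_)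
      show fderiv ℝ U r v = α * v.2 * (r.2 ^ (α - 1) * u r) + r.2 ^ α * fderiv ℝ u r v
      rw [hD1 r hr v]; ring
    rw [he.fderiv_eq]
    have d1 : DifferentiableAt ℝ (fun r : EuclideanSpace ℝ (Fin n) × ℝ => r.2 ^ (α - 1) * u r) p :=
      (rpow_mul_hasFDerivAt (α - 1) hp (hud p hp)).differentiableAt
    have d2 : DifferentiableAt ℝ
        (fun r : EuclideanSpace ℝ (Fin n) × ℝ => r.2 ^ α * fderiv ℝ u r v) p :=
      (rpow_mul_hasFDerivAt α hp (hu2 p hp v)).differentiableAt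
    rw [fderiv_fun_add (d1.const_mul _) d2, ContinuousLinearMap.add_apply,
      fderiv_const_mul d1, ContinuousLinearMap.smul_apply,
      fderiv_rpow_mul (α - 1) hp (hud p hp) w, fderiv_rpow_mul α hp (hu2 p hp v) w]
    simp
  have hLap : flatLap n U p = p.2 ^ α * flatLap n u p
      + 2 * α * p.2 ^ (α - 1) * fderiv ℝ u p (0, 1)
      + α * (α - 1) * p.2 ^ (α - 1 - 1) * u p := by
    unfold flatLap
    have hsum : ∀ i : Fin n,
        fderiv ℝ (fun r => fderiv ℝ U r (EuclideanSpace.single i 1, 0)) p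
          (EuclideanSpace.single i 1, 0)
        = p.2 ^ α * fderiv ℝ (fun r => fderiv ℝ u r (EuclideanSpace.single i 1, 0)) p
          (EuclideanSpace.single i 1, 0) := by
      intro i
      rw [hD2 (EuclideanSpace.single i 1, 0) (EuclideanSpace.single i 1, 0)]
      norm_num
    rw [Finset.sum_congr rfl (fun i _ => hsum i), ← Finset.mul_sum,
      hD2 (0, 1) (0, 1)]
    norm_num
    ring
  rw [hLap, hD1 p hp (0, 1), hγ]
  norm_num
  have h1 : p.2 ^ α = p.2 ^ (α - 1 - 1) * p.2 ^ 2 := by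
    rw [← Real.rpow_natCast p.2 2, ← Real.rpow_add hp]
    norm_num
    congr 1
    ring
  have h2 : p.2 ^ (α - 1) = p.2 ^ (α - 1 - 1) * p.2 ^ (1 : ℝ) := by
    rw [← Real.rpow_add hp]
    congr 1
    ring
  rw [Real.rpow_one] at h2
  rw [h1, h2, hα]
  linear_combination (p.2 ^ (s - (n : ℝ) - 1 - 1) * p.2) * heq p hp
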